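/- arXiv:1112.3127 — 3 statements merged into one kernel-verified Lean document; each statement's English description precedes it below -/
import Mathlib

section
/- Let G be a finite group, k a number field regarded as a subfield of ℂ, and M a finite-dimensional k-vector space carrying a linear representation of G. Let φ be an irreducible finite-dimensional complex representation of G such that φ occurs with multiplicity exactly one in the complexification ℂ ⊗_k M (i.e. ⟨χ_φ, χ_{ℂ⊗_k M}⟩ = 1) and such that χ_φ(g) ∈ k for all g ∈ G. Then φ can be realized over k: there exists a representation of G on a finite-dimensional k-vector space W such that ℂ ⊗_k W is isomorphic to φ as a representation of G. -/
/-!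
Let `χ` be the character of `φ`, `d = χ 1 = dim φ` and `V = ℂ ⊗[k] M`. The operator
`e = (d / |G|) ∑ g, χ g⁻¹ • ρ g` commutes with `G`, so by Schur's lemma and the orthogonality
relations it is the identity on `φ`. Taking traces against `φ(s⁻¹)` turns this into a convolution
identity for `χ`, which makes `e` idempotent in every representation. On `V` its trace is
`d · dim Hom_G(φ, V) = d`, the multiplicity being `1` once `χ g⁻¹ = conj (χ g)` (eigenvalues of
`ρ g` are roots of unity). A nonzero `G`-map `φ → V` is injective and fixed by `e`, so it is an
isomorphism onto `e V`. Since `χ` is `k`-valued, `e` is the base change of the same operator `p`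
on `M`, and `W = p M` satisfies `ℂ ⊗[k] W ≅ e V`.
-/

open scoped TensorProduct

/-- The standard inner product of class functions on a finite group. -/
noncomputable def charInner {G : Type*} [Group G] [Fintype G] (χ ψ : G → ℂ) : ℂ :=
  (Fintype.card G : ℂ)⁻¹ * ∑ g : G, χ g * (starRingEnd ℂ) (ψ g)

open Module

universe u w

theorem LinearMap.range_baseChange {R M N : Type*} [CommRing R] [AddCommGroup M] [Module R M]
    [AddCommGroup N] [Module R N] (A : Type*) [CommRing A] [Algebra R A] (f : M →ₗ[R] N) :
    range (f.baseChange A) = (range f).baseChange A := by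
  conv_lhs => rw [show f = (range f).subtype ∘ₗ f.rangeRestrict from rfl, baseChange_comp]
  exact range_comp_of_range_eq_top _
    (range_eq_top.2 (baseChange_surjective A f.surjective_rangeRestrict))

namespace Module.End

variable {K V : Type*} [Field K] [AddCommGroup V] [Module K V]

theorem isSemisimple_of_pow_eq_one {f : End K V} {n : ℕ} (hn : (n : K) ≠ 0) (hf : f ^ n = 1) :
    f.IsSemisimple :=
  isSemisimple_of_squarefree_aeval_eq_zero
    (Polynomial.separable_X_pow_sub_C 1 hn one_ne_zero).squarefree (by simp [hf])

variable [IsAlgClosed K] [FiniteDimensional K V]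

theorem IsSemisimple.trace_eq_finsum {f g : End K V} (hf : f.IsSemisimple) {c : K → K}
    (hg : ∀ μ, ∀ v ∈ f.eigenspace μ, g v = c μ • v) :
    LinearMap.trace K V g = ∑ᶠ μ, c μ * finrank K (f.eigenspace μ) := by
  classical
  have hmaps : ∀ μ, Set.MapsTo g (f.eigenspace μ) (f.eigenspace μ) := fun μ v hv => by
    rw [SetLike.mem_coe, hg μ v hv]
    exact Submodule.smul_mem _ _ hv
  have hfin : {μ | f.eigenspace μ ≠ ⊥}.Finite :=
    WellFoundedGT.finite_ne_bot_of_iSupIndep f.eigenspaces_iSupIndep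
  have hrestrict : ∀ μ, g.restrict (hmaps μ) = c μ • LinearMap.id := fun μ => by
    ext v
    exact hg μ v v.2
  rw [LinearMap.trace_eq_sum_trace_restrict'
    (DirectSum.isInternal_submodule_of_iSupIndep_of_iSup_eq_top f.eigenspaces_iSupIndep
      hf.iSup_eigenspace_eq_top) hfin hmaps]
  rw [finsum_eq_sum_of_support_subset _ (s := hfin.toFinset) ?_]
  · simp [hrestrict, LinearMap.trace_id]
  · intro μ hμ
    rw [Finset.mem_coe, Set.Finite.mem_toFinset]
    rintro (h : f.eigenspace μ = ⊥)
    simp [Submodule.finrank_eq_zero.2 h] at hμ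

end Module.End

open Module.End in
theorem LinearMap.trace_eq_conj_trace_of_pow_eq_one {V : Type*} [AddCommGroup V] [Module ℂ V]
    [FiniteDimensional ℂ V] {f g : End ℂ V} {n : ℕ} (hn : n ≠ 0) (hf : f ^ n = 1)
    (hgf : g * f = 1) :
    trace ℂ V g = starRingEnd ℂ (trace ℂ V f) := by
  have hs := isSemisimple_of_pow_eq_one (Nat.cast_ne_zero.2 hn) hf
  have hg : ∀ μ, ∀ v ∈ f.eigenspace μ, g v = μ⁻¹ • v := fun μ v hv => by
    have hv' : v = μ • g v := by
      rw [← map_smul, ← mem_eigenspace_iff.1 hv, ← mul_apply, hgf, one_apply]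
    rcases eq_or_ne μ 0 with rfl | hμ
    · rw [zero_smul] at hv'
      simp [hv']
    · rw [hv', smul_smul, inv_mul_cancel₀ hμ, one_smul, ← hv']
  rw [hs.trace_eq_finsum hg, hs.trace_eq_finsum (c := fun μ => μ) fun μ v hv =>
    mem_eigenspace_iff.1 hv]
  refine .trans ?_
    ((starRingEnd ℂ).toAddMonoidHom.map_finsum_of_injective (RingHom.injective _) _).symm
  refine finsum_congr fun μ => ?_
  rcases eq_or_ne (f.eigenspace μ) ⊥ with h | h
  · simp [h]
  · have hμ : μ ^ n = 1 := by
      obtain ⟨v, hv⟩ := HasEigenvalue.exists_hasEigenvector h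
      have := hv.pow_apply n
      rw [hf, one_apply] at this
      exact (smul_left_injective ℂ hv.2 (this.symm.trans (one_smul ℂ v).symm))
    simp [Complex.inv_eq_conj (Complex.norm_eq_one_of_pow_eq_one hμ hn)]

namespace Representation

section BaseChange

variable {k G M : Type*} [CommSemiring k] [Monoid G] [AddCommMonoid M] [Module k M]
  (A : Type*) [Semiring A] [Algebra k A] (ρ : Representation k G M)

def baseChange : Representation A G (A ⊗[k] M) :=
  (Module.End.baseChangeHom k A M).toMonoidHom.comp ρ

@[simp]
theorem baseChange_apply (g : G) : ρ.baseChange A g = (ρ g).baseChange A := rfl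

end BaseChange

theorem char_inv_eq_conj {G V : Type*} [Group G] [Finite G] [AddCommGroup V]
    [Module ℂ V] [FiniteDimensional ℂ V] (ρ : Representation ℂ G V) (g : G) :
    ρ.character g⁻¹ = starRingEnd ℂ (ρ.character g) :=
  LinearMap.trace_eq_conj_trace_of_pow_eq_one (orderOf_pos g).ne'
    (by rw [← map_pow, pow_orderOf_eq_one, map_one])
    (by rw [← map_mul, inv_mul_cancel, map_one])

theorem sum_smul_mul_sum_smul {k G V : Type*} [CommSemiring k] [Group G] [Fintype G]
    [AddCommMonoid V] [Module k V] (ρ : Representation k G V) (a b : G → k) :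
    (∑ g, a g • ρ g) * (∑ g, b g • ρ g) = ∑ s, (∑ g, a g * b (g⁻¹ * s)) • ρ s := by
  simp_rw [Finset.sum_mul_sum, Finset.sum_smul]
  conv_rhs => rw [Finset.sum_comm]
  refine Finset.sum_congr rfl fun g _ => Fintype.sum_equiv (Equiv.mulLeft g) _ _ fun h => ?_
  simp [map_mul, smul_smul, mul_comm]

section IsotypicProj

variable {K G V W : Type*} [Field K] [Group G] [Fintype G] [AddCommGroup V] [Module K V]
  [AddCommGroup W] [Module K W]

/-- For an irreducible character `χ`, the projection onto the `χ`-isotypic component. -/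
noncomputable def isotypicProj (ρ : Representation K G V) (χ : G → K) : Module.End K V :=
  (χ 1 / Nat.card G) • ∑ g, χ g⁻¹ • ρ g

theorem comp_isotypicProj {ρ : Representation K G V} {σ : Representation K G W}
    {f : V →ₗ[K] W} (hf : ∀ g, f ∘ₗ ρ g = σ g ∘ₗ f) (χ : G → K) :
    f ∘ₗ ρ.isotypicProj χ = σ.isotypicProj χ ∘ₗ f := by
  ext v
  simp only [isotypicProj, LinearMap.comp_apply, LinearMap.smul_apply, LinearMap.coe_sum,
    Finset.sum_apply, map_smul, map_sum]
  congr 1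
  refine Finset.sum_congr rfl fun g _ => ?_
  rw [← LinearMap.comp_apply, hf, LinearMap.comp_apply]

theorem isotypicProj_commute (ρ : Representation K G V) {χ : G → K}
    (hχ : ∀ g h, χ (h * g * h⁻¹) = χ g) (h : G) : Commute (ρ.isotypicProj χ) (ρ h) := by
  refine .smul_left ?_ _
  rw [Commute, SemiconjBy, Finset.sum_mul, Finset.mul_sum]
  refine Fintype.sum_equiv (MulAut.conj h⁻¹).toEquiv _ _ fun g => ?_
  simp only [MulEquiv.toEquiv_eq_coe, MulEquiv.coe_toEquiv, MulAut.conj_apply, inv_inv,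
    smul_mul_assoc, mul_smul_comm, ← map_mul]
  rw [show (h⁻¹ * g * h)⁻¹ = h⁻¹ * g⁻¹ * h⁻¹⁻¹ by group, hχ]
  congr 2
  group

theorem isIdempotentElem_isotypicProj (ρ : Representation K G V) {χ : G → K}
    (hχ : ∀ s, χ 1 / Nat.card G * ∑ g, χ g⁻¹ * χ (s⁻¹ * g) = χ s⁻¹) :
    IsIdempotentElem (ρ.isotypicProj χ) := by
  have hconv := sum_smul_mul_sum_smul ρ (fun g => χ g⁻¹) (fun g => χ g⁻¹)
  simp only [mul_inv_rev, inv_inv] at hconv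
  rw [IsIdempotentElem, isotypicProj, smul_mul_smul_comm, hconv, mul_smul, Finset.smul_sum]
  simp_rw [smul_smul, hχ]

theorem baseChange_isotypicProj (ρ : Representation K G V) (L : Type*) [Field L] [Algebra K L]
    (χ : G → K) :
    (ρ.baseChange L).isotypicProj (algebraMap K L ∘ χ) = (ρ.isotypicProj χ).baseChange L := by
  change _ = Module.End.baseChangeHom K L V _
  simp only [isotypicProj, map_smul, map_sum, Function.comp_apply,
    ← map_natCast (algebraMap K L), ← map_div₀, algebraMap_smul]
  rfl

end IsotypicProj

theorem exists_linearEquiv_of_range_eq {A G X₁ X₂ Y : Type*} [CommSemiring A] [Monoid G]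
    [AddCommMonoid X₁] [Module A X₁] [AddCommMonoid X₂] [Module A X₂] [AddCommMonoid Y]
    [Module A Y] {ρ₁ : Representation A G X₁} {ρ₂ : Representation A G X₂}
    {τ : Representation A G Y} {f₁ : X₁ →ₗ[A] Y} {f₂ : X₂ →ₗ[A] Y} (h₁ : Function.Injective f₁)
    (h₂ : Function.Injective f₂) (hf₁ : ∀ g, f₁ ∘ₗ ρ₁ g = τ g ∘ₗ f₁)
    (hf₂ : ∀ g, f₂ ∘ₗ ρ₂ g = τ g ∘ₗ f₂) (hrange : LinearMap.range f₁ = LinearMap.range f₂) :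
    ∃ e : X₁ ≃ₗ[A] X₂, ∀ g x, e (ρ₁ g x) = ρ₂ g (e x) := by
  let e := (LinearEquiv.ofInjective f₁ h₁).trans
    ((LinearEquiv.ofEq _ _ hrange).trans (LinearEquiv.ofInjective f₂ h₂).symm)
  have he : ∀ x, f₂ (e x) = f₁ x := fun x => by
    simp [e, ← LinearEquiv.ofInjective_apply f₂ (h := h₂)]
  refine ⟨e, fun g x => h₂ ?_⟩
  calc f₂ (e (ρ₁ g x)) = τ g (f₁ x) := (he _).trans (LinearMap.congr_fun (hf₁ g) x)
    _ = f₂ (ρ₂ g (e x)) := by rw [← he x, ← LinearMap.comp_apply, ← hf₂, LinearMap.comp_apply]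

theorem exists_rep_baseChange_equiv_of_range_eq {k A G X : Type*} {M : Type u} [Field k]
    [CommRing A] [Algebra k A] [Monoid G] [AddCommGroup M] [Module k M] [FiniteDimensional k M]
    [AddCommGroup X] [Module A X] (ρ : Representation k G M) (σ : Representation A G X)
    {p : Module.End k M} (hp : ∀ g, Commute p (ρ g)) {ℓ : X →ₗ[A] A ⊗[k] M}
    (hℓ : Function.Injective ℓ) (hℓσ : ∀ g, ℓ ∘ₗ σ g = (ρ g).baseChange A ∘ₗ ℓ)
    (hrange : LinearMap.range ℓ = LinearMap.range (p.baseChange A)) :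
    ∃ W : Rep.{max u w} k G, FiniteDimensional k W ∧ ∃ e : A ⊗[k] W ≃ₗ[A] X,
      ∀ g x, e ((W.ρ g).baseChange A x) = σ g (e x) := by
  let S : Subrepresentation ρ := ⟨LinearMap.range p, by
    rintro g _ ⟨v, rfl⟩
    exact ⟨ρ g v, LinearMap.congr_fun (hp g) v⟩⟩
  let E : ULift.{w} S.toSubmodule ≃ₗ[k] S.toSubmodule := ULift.moduleEquiv
  let W := Rep.of (E.symm.conjRingEquiv.toMonoidHom.comp S.toRepresentation)
  let j : W →ₗ[k] M := S.toSubmodule.subtype ∘ₗ E.toLinearMap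
  have hj : Function.Injective j := S.toSubmodule.injective_subtype.comp E.injective
  have hjρ : ∀ g, j ∘ₗ W.ρ g = ρ g ∘ₗ j := fun g => rfl
  have hjrange : LinearMap.range j = LinearMap.range p := by
    rw [LinearMap.range_comp_of_range_eq_top _ E.range, Submodule.range_subtype]
  obtain ⟨e, he⟩ := exists_linearEquiv_of_range_eq (ρ₁ := W.ρ.baseChange A) (ρ₂ := σ)
    (τ := ρ.baseChange A) (f₁ := j.baseChange A)
    (by
      rw [LinearMap.baseChange_eq_ltensor]
      exact Module.Flat.lTensor_preserves_injective_linearMap _ hj)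
    hℓ (fun g => by simp only [baseChange_apply, ← LinearMap.baseChange_comp, hjρ]) hℓσ
    (by rw [hrange, LinearMap.range_baseChange, LinearMap.range_baseChange, hjrange])
  exact ⟨W, E.symm.finiteDimensional, e, he⟩

end Representation

namespace FDRep

open CategoryTheory

theorem charInner_character_eq_finrank_hom {G : Type*} [Group G] [Fintype G] (V W : FDRep ℂ G) :
    charInner V.character W.character = finrank ℂ (V ⟶ W) := by
  have := invertibleOfNonzero (NeZero.ne (Nat.card G : ℂ))
  rw [← scalar_product_char_eq_finrank_equivariant, charInner, Fintype.card_eq_nat_card]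
  refine congrArg _ (Fintype.sum_equiv (Equiv.inv G) _ _ fun g => ?_)
  rw [Equiv.inv_apply, inv_inv, mul_comm]
  exact congrArg (· * _) (Representation.char_inv_eq_conj W.ρ g).symm

variable {K G : Type*} [Field K] [Group G]

theorem linearMap_comp_ρ {φ V : FDRep K G} (f : φ ⟶ V) (g : G) :
    f.hom.hom.hom ∘ₗ φ.ρ g = V.ρ g ∘ₗ f.hom.hom.hom := by
  ext x
  exact LinearMap.congr_fun (congrArg (fun u => u.hom.hom) (f.comm g)) x

theorem trace_isotypicProj [Fintype G] [Invertible (Nat.card G : K)] (φ V : FDRep K G) :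
    LinearMap.trace K V (Representation.isotypicProj V.ρ φ.character) =
      finrank K φ * finrank K (φ ⟶ V) := by
  rw [← scalar_product_char_eq_finrank_equivariant, Representation.isotypicProj, map_smul, map_sum]
  simp only [map_smul, smul_eq_mul, char_one]
  rw [div_eq_mul_inv, mul_assoc]
  congr 2
  exact Finset.sum_congr rfl fun g _ => mul_comm _ _

variable (φ : FDRep K G) [Simple φ]

theorem injective_of_ne_zero {V : FDRep K G} {f : φ ⟶ V} (hf : f ≠ 0) :
    Function.Injective f.hom.hom.hom :=
  have := mono_of_nonzero_from_simple hf
  (Rep.mono_iff_injective _).1 ((forget₂ (FDRep K G) (Rep K G)).map_mono f)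

instance nontrivial_of_simple : Nontrivial φ := by
  by_contra h
  rw [not_nontrivial_iff_subsingleton] at h
  apply id_nonzero φ
  ext x
  exact Subsingleton.elim _ _

theorem exists_eq_smul_one_of_commute [IsAlgClosed K] {T : Module.End K φ}
    (hT : ∀ g, Commute T (φ.ρ g)) : ∃ c : K, T = c • 1 := by
  let f : φ ⟶ φ := Action.Hom.mk (FGModuleCat.ofHom T) fun g => by
    ext x; exact LinearMap.congr_fun (hT g) x
  obtain ⟨c, hc⟩ := endomorphism_simple_eq_smul_id K f
  exact ⟨c, (congrArg (fun u : φ ⟶ φ => u.hom.hom.hom) hc).symm⟩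

variable [Fintype G] [IsAlgClosed K] [CharZero K]

theorem isotypicProj_self : Representation.isotypicProj φ.ρ φ.character = 1 := by
  have := invertibleOfNonzero (NeZero.ne (Nat.card G : K))
  obtain ⟨c, hc⟩ :=
    exists_eq_smul_one_of_commute φ (Representation.isotypicProj_commute φ.ρ (char_conj φ))
  -- Comparing traces: `c * dim φ = dim φ * dim End(φ) = dim φ`.
  have htrace := trace_isotypicProj φ φ
  rw [finrank_endomorphism_simple_eq_one K φ, hc, map_smul, LinearMap.trace_one, smul_eq_mul,
    Nat.cast_one, mul_one, mul_eq_right₀ (Nat.cast_ne_zero.2 finrank_pos.ne')] at htrace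
  rw [hc, htrace, one_smul]

theorem char_convolution (s : G) :
    φ.character 1 / Nat.card G * ∑ g, φ.character g⁻¹ * φ.character (s⁻¹ * g) =
      φ.character s⁻¹ := by
  have h := congrArg (fun T => LinearMap.trace K φ (φ.ρ s⁻¹ * T)) (isotypicProj_self φ)
  simp only [Representation.isotypicProj, Finset.mul_sum, mul_smul_comm, map_smul, map_sum,
    ← map_mul, mul_one] at h
  exact h

theorem isIdempotentElem_isotypicProj (V : FDRep K G) :
    IsIdempotentElem (Representation.isotypicProj V.ρ φ.character) :=
  Representation.isIdempotentElem_isotypicProj V.ρ (char_convolution φ)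

theorem range_eq_range_isotypicProj {V : FDRep K G} (hV : finrank K (φ ⟶ V) = 1)
    {ℓ : φ →ₗ[K] V} (hℓ : Function.Injective ℓ) (hℓρ : ∀ g, ℓ ∘ₗ φ.ρ g = V.ρ g ∘ₗ ℓ) :
    LinearMap.range ℓ = LinearMap.range (Representation.isotypicProj V.ρ φ.character) := by
  have := invertibleOfNonzero (NeZero.ne (Nat.card G : K))
  set e := Representation.isotypicProj V.ρ φ.character
  have hfix : ∀ x, e (ℓ x) = ℓ x := fun x => by
    simpa [isotypicProj_self] using
      (LinearMap.congr_fun (Representation.comp_isotypicProj hℓρ φ.character) x).symm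
  have hrank : finrank K (LinearMap.range e) = finrank K φ := by
    have h :=
      (LinearMap.IsIdempotentElem.isProj_range _ (isIdempotentElem_isotypicProj φ V)).trace
    rw [trace_isotypicProj, hV, Nat.cast_one, mul_one] at h
    exact_mod_cast h.symm
  refine Submodule.eq_of_le_of_finrank_eq ?_ (by rw [hrank, LinearMap.finrank_range_of_inj hℓ])
  rintro _ ⟨x, rfl⟩
  exact ⟨ℓ x, hfix x⟩

end FDRep

theorem realizable_of_multiplicity_one_general (G : Type) [Group G] [Fintype G]
    (k : Type) [Field k] [Algebra k ℂ]
    (M : Type) [AddCommGroup M] [Module k M] [FiniteDimensional k M]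
    (ρM : Representation k G M)
    (φ : FDRep ℂ G) (hφ : CategoryTheory.Simple φ)
    (hmult : charInner φ.character
      (fun g => LinearMap.trace ℂ (ℂ ⊗[k] M) (LinearMap.baseChange ℂ (ρM g))) = 1)
    (hvals : ∀ g : G, φ.character g ∈ Set.range (algebraMap k ℂ)) :
    ∃ W : Rep k G, FiniteDimensional k W ∧
      ∃ e : (ℂ ⊗[k] W) ≃ₗ[ℂ] φ,
        ∀ (g : G) (x : ℂ ⊗[k] W), e (LinearMap.baseChange ℂ (W.ρ g) x) = φ.ρ g (e x) := by
  let V := FDRep.of (ρM.baseChange ℂ)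
  have hV : finrank ℂ (φ ⟶ V) = 1 := by
    exact_mod_cast (FDRep.charInner_character_eq_finrank_hom φ V).symm.trans hmult
  have : Nontrivial (φ ⟶ V) := Module.nontrivial_of_finrank_eq_succ hV
  obtain ⟨f, hf⟩ := exists_ne (0 : φ ⟶ V)
  have hf_inj := FDRep.injective_of_ne_zero φ hf
  choose χ hχ using hvals
  have hχ_class : ∀ g h, χ (h * g * h⁻¹) = χ g := fun g h =>
    (algebraMap k ℂ).injective (by rw [hχ, hχ, FDRep.char_conj])
  refine ρM.exists_rep_baseChange_equiv_of_range_eq φ.ρ (ρM.isotypicProj_commute hχ_class) hf_inj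
    (FDRep.linearMap_comp_ρ f) ?_
  rw [← Representation.baseChange_isotypicProj, show algebraMap k ℂ ∘ χ = φ.character from
    funext hχ]
  exact FDRep.range_eq_range_isotypicProj φ hV hf_inj (FDRep.linearMap_comp_ρ f)

/-- Let `G` be a finite group, `k` a number field inside `ℂ`, and `M` a
finite-dimensional `k`-linear representation of `G`.  If an irreducible complex representation
`φ` of `G` occurs with multiplicity exactly one in the complexification `ℂ ⊗[k] M` and its
character takes values in `k`, then `φ` can be realized over `k`. -/
theorem realizable_of_multiplicity_one (G : Type) [Group G] [Fintype G]
    (k : Type) [Field k] [NumberField k] [Algebra k ℂ]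
    (M : Type) [AddCommGroup M] [Module k M] [FiniteDimensional k M]
    (ρM : Representation k G M)
    (φ : FDRep ℂ G) (hφ : CategoryTheory.Simple φ)
    (hmult : charInner φ.character
      (fun g => LinearMap.trace ℂ (ℂ ⊗[k] M) (LinearMap.baseChange ℂ (ρM g))) = 1)
    (hvals : ∀ g : G, φ.character g ∈ Set.range (algebraMap k ℂ)) :
    ∃ W : Rep k G, FiniteDimensional k W ∧
      ∃ e : (ℂ ⊗[k] W) ≃ₗ[ℂ] φ,
        ∀ (g : G) (x : ℂ ⊗[k] W), e (LinearMap.baseChange ℂ (W.ρ g) x) = φ.ρ g (e x) :=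
  realizable_of_multiplicity_one_general G k M ρM φ hφ hmult hvals
end

section
/- Let d ≥ 1, ζ = exp(2πi/d), and let W ⊂ GL_2(ℂ) be the subgroup generated by the diagonal matrix t = diag(1, ζ) and the permutation matrix s = [[0,1],[1,0]] (this is the complex reflection group G(d,1,2)). Then every irreducible character of W lies in the subring of the ring of class functions on W generated by the character of the inclusion W ↪ GL_2(ℂ) together with all group homomorphisms W → ℂ^×. In other words, R(W) is generated by the natural 2-dimensional representation and the 1-dimensional representations. -/
open Matrix Complex

noncomputable section

/-- The diagonal reflection `t = diag(1, ζ)` with `ζ = exp(2πi/d)`, as an element of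
`GL₂(ℂ)`. -/
def genT (d : ℕ) : GL (Fin 2) ℂ :=
  { val := Matrix.diagonal ![1, Complex.exp (2 * Real.pi * Complex.I / d)],
    inv := Matrix.diagonal ![1, (Complex.exp (2 * Real.pi * Complex.I / d))⁻¹],
    val_inv := by
      rw [Matrix.diagonal_mul_diagonal]
      have h : Complex.exp (2 * Real.pi * Complex.I / d) ≠ 0 := Complex.exp_ne_zero _
      ext i j
      fin_cases i <;> fin_cases j <;>
        simp [Matrix.diagonal, Matrix.one_apply, mul_inv_cancel₀ h]
    inv_val := by
      rw [Matrix.diagonal_mul_diagonal]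
      have h : Complex.exp (2 * Real.pi * Complex.I / d) ≠ 0 := Complex.exp_ne_zero _
      ext i j
      fin_cases i <;> fin_cases j <;>
        simp [Matrix.diagonal, Matrix.one_apply, inv_mul_cancel₀ h] }

/-- The transposition matrix `s = [[0,1],[1,0]]`, as an element of `GL₂(ℂ)`. -/
def genS : GL (Fin 2) ℂ :=
  { val := !![0, 1; 1, 0],
    inv := !![0, 1; 1, 0],
    val_inv := by
      ext i j
      fin_cases i <;> fin_cases j <;> simp [Matrix.mul_apply, Fin.sum_univ_two, Matrix.one_apply]
    inv_val := by
      ext i j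
      fin_cases i <;> fin_cases j <;> simp [Matrix.mul_apply, Fin.sum_univ_two, Matrix.one_apply] }

/-- The complex reflection group `G(d,1,2)`, i.e. the subgroup of `GL₂(ℂ)` generated by
`t = diag(1, ζ)` and the transposition matrix `s`. -/
def Gd12 (d : ℕ) : Subgroup (GL (Fin 2) ℂ) := Subgroup.closure {genT d, genS}

end

/-!
Write `t' = s t s`. Every element of `W` is `t'^i t^j = diag(ζ^i, ζ^j)` or `t'^i t^j s`. In a
simple representation, `t` and `t'` commute, so they have a common eigenvector `v`; then `s`
swaps `v` and `s v`, whose span is therefore invariant, hence everything. Either the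
representation is one-dimensional, and its character is a linear character, or `(v, s v)` is a
basis; then, with `t ↦ diag(ζ^p, ζ^r)`, the character is `diag(x, y) ↦ x^r y^p + x^p y^r` and
vanishes off the diagonal. If `{p, r} = {b, b + m}`, this function is `det^b · p_m`, where
`p_m(diag(x, y)) = x^m + y^m` (and `p_m = 0` off the diagonal) satisfies Newton's recursion
`p_{m+2} = tr · p_{m+1} - det · p_m`, starting from `p_1 = tr` and `p_0 = 1 + sign`.
-/

open CategoryTheory

universe u

section NormalForm

variable {M : Type*} [Monoid M] {s t : M}

theorem exists_eq_pow_mul_pow_of_mem_closure_pair (hs : s * s = 1)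
    (hts : Commute t (s * t * s)) {g : M} (hg : g ∈ Submonoid.closure {t, s}) :
    ∃ i j : ℕ, g = (s * t * s) ^ i * t ^ j ∨ g = (s * t * s) ^ i * t ^ j * s := by
  set t' := s * t * s
  have hst : s * t = t' * s := by rw [mul_assoc (s * t) s s, hs, mul_one]
  induction hg using Submonoid.closure_induction_right with
  | one => exact ⟨0, 0, Or.inl (by simp)⟩
  | mul_right g _ y hy ih =>
    obtain ⟨i, j, rfl | rfl⟩ := ih <;> rcases hy with hy | hy <;> subst y
    · exact ⟨i, j + 1, Or.inl (by rw [pow_succ, mul_assoc])⟩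
    · exact ⟨i, j, Or.inr rfl⟩
    · refine ⟨i + 1, j, Or.inr ?_⟩
      rw [mul_assoc _ s t, hst, ← mul_assoc, mul_assoc (t' ^ i) (t ^ j) t', (hts.pow_left j).eq,
        ← mul_assoc, ← pow_succ]
    · exact ⟨i, j, Or.inl (by rw [mul_assoc, hs, mul_one])⟩

end NormalForm

theorem Module.End.pow_apply_of_apply_eq_smul {R V : Type*} [CommSemiring R] [AddCommMonoid V]
    [Module R V] {f : Module.End R V} {v : V} {μ : R} (h : f v = μ • v) (n : ℕ) :
    (f ^ n) v = μ ^ n • v := by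
  induction n with
  | zero => simp
  | succ n ih => rw [pow_succ, Module.End.mul_apply, h, map_smul, ih, smul_smul, pow_succ']

theorem Module.End.exists_common_eigenvector {K V : Type*} [Field K] [IsAlgClosed K]
    [AddCommGroup V] [Module K V] [FiniteDimensional K V] [Nontrivial V] {f g : Module.End K V}
    (hfg : Commute f g) : ∃ v ≠ 0, ∃ a b : K, f v = a • v ∧ g v = b • v := by
  obtain ⟨a, ha⟩ := Module.End.exists_eigenvalue f
  have : Nontrivial (f.eigenspace a) := Submodule.nontrivial_iff_ne_bot.mpr ha
  obtain ⟨b, hb⟩ :=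
    Module.End.exists_eigenvalue (g.restrict (Module.End.mapsTo_genEigenspace_of_comm hfg a 1))
  obtain ⟨⟨v, hv⟩, hvb⟩ := hb.exists_hasEigenvector
  refine ⟨v, fun h => hvb.2 (Subtype.ext h), a, b, Module.End.mem_eigenspace_iff.mp hv, ?_⟩
  exact congrArg Subtype.val (Module.End.mem_eigenspace_iff.mp hvb.1)

theorem LinearMap.eq_trace_smul_one_of_finrank_eq_one {K V : Type*} [Field K] [AddCommGroup V]
    [Module K V] (h : Module.finrank K V = 1) (f : Module.End K V) :
    f = LinearMap.trace K V f • 1 := by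
  have : FiniteDimensional K V := Module.finite_of_finrank_eq_succ h
  have : Nontrivial V := Module.nontrivial_of_finrank_eq_succ h
  obtain ⟨v, hv⟩ := exists_ne (0 : V)
  obtain ⟨a, ha⟩ := exists_smul_eq_of_finrank_eq_one h hv (f v)
  have hf : f = a • 1 := by
    ext w
    obtain ⟨b, rfl⟩ := exists_smul_eq_of_finrank_eq_one h hv w
    simp [← ha, smul_smul, mul_comm]
  simp [hf, h]

theorem LinearMap.trace_mul_of_finrank_eq_one {K V : Type*} [Field K] [AddCommGroup V]
    [Module K V] (h : Module.finrank K V = 1) (f g : Module.End K V) :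
    LinearMap.trace K V (f * g) = LinearMap.trace K V f * LinearMap.trace K V g := by
  have : FiniteDimensional K V := Module.finite_of_finrank_eq_succ h
  conv_lhs => rw [eq_trace_smul_one_of_finrank_eq_one h f, eq_trace_smul_one_of_finrank_eq_one h g]
  simp [h, mul_comm]

theorem LinearMap.trace_eq_repr_add_repr {K V : Type*} [Field K] [AddCommGroup V] [Module K V]
    (b : Module.Basis (Fin 2) K V) (f : Module.End K V) :
    LinearMap.trace K V f = b.repr (f (b 0)) 0 + b.repr (f (b 1)) 1 := by
  rw [LinearMap.trace_eq_matrix_trace K b, Matrix.trace_fin_two, LinearMap.toMatrix_apply,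
    LinearMap.toMatrix_apply]

namespace FDRep

variable {k G : Type u} [Field k] [Monoid G] (V : FDRep k G)

theorem nontrivial_of_simple_s9 [Simple V] : Nontrivial V := by
  by_contra h
  rw [not_nontrivial_iff_subsingleton] at h
  exact id_nonzero V (Action.Hom.ext (by ext x; exact Subsingleton.elim _ _))

theorem eq_top_of_invariant [Simple V] (U : Submodule k V) (hU : U ≠ ⊥)
    (hinv : ∀ g, ∀ x ∈ U, V.ρ g x ∈ U) : U = ⊤ := by
  let W : Subrepresentation V.ρ := ⟨U, hinv⟩
  let ι : FDRep.of W.toRepresentation ⟶ V :=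
    { hom := FGModuleCat.ofHom U.subtype
      comm := fun _ => rfl }
  have : Mono ι := ⟨fun _ _ h => by ext x; exact congrArg (fun p => p.hom x) h⟩
  obtain ⟨u, hu, hu0⟩ := Submodule.exists_mem_ne_zero_of_ne_bot hU
  have : IsIso ι := isIso_of_mono_of_nonzero fun h => hu0 (congrArg (fun p => p.hom ⟨u, hu⟩) h)
  rw [Submodule.eq_top_iff']
  intro x
  have hx : ι.hom ((inv ι).hom x) = x := congrArg (fun p => p.hom x) (IsIso.inv_hom_id ι)
  exact hx ▸ ((inv ι).hom x).2

theorem exists_character_eq_of_finrank_eq_one {G : Type u} [Group G] (V : FDRep k G)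
    (h : Module.finrank k V = 1) : ∃ χ : G →* kˣ, V.character = fun g => (χ g : k) := by
  let χ : G →* k :=
    { toFun := V.character
      map_one' := by rw [FDRep.char_one, h, Nat.cast_one]
      map_mul' := fun g g' => by
        simp only [FDRep.character, map_mul, LinearMap.trace_mul_of_finrank_eq_one h] }
  exact ⟨χ.toHomUnits, rfl⟩

end FDRep

noncomputable section

namespace Gd12

variable {d : ℕ}

abbrev zeta (d : ℕ) : ℂ := Complex.exp (2 * Real.pi * Complex.I / d)

def t (d : ℕ) : Gd12 d := ⟨genT d, Subgroup.subset_closure (Set.mem_insert _ _)⟩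

def s (d : ℕ) : Gd12 d := ⟨genS, Subgroup.subset_closure (Set.mem_insert_of_mem _ rfl)⟩

def mat : Gd12 d →* Matrix (Fin 2) (Fin 2) ℂ := (Units.coeHom _).comp (Gd12 d).subtype

theorem mat_injective : Function.Injective (mat : Gd12 d → Matrix (Fin 2) (Fin 2) ℂ) :=
  fun _ _ h => Subtype.ext (Units.ext h)

theorem mat_t : mat (t d) = diagonal ![1, zeta d] := rfl

theorem mat_s : mat (s d) = !![0, 1; 1, 0] := rfl

theorem mat_s_mul_t_mul_s : mat (s d * t d * s d) = diagonal ![zeta d, 1] := by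
  rw [map_mul, map_mul, mat_t, mat_s, diagonal_vec2, diagonal_vec2]
  simp

theorem s_mul_s : s d * s d = 1 :=
  mat_injective (by simp [mat_s, Matrix.one_fin_two])

theorem commute_t_s_mul_t_mul_s : Commute (t d) (s d * t d * s d) :=
  mat_injective (by
    rw [map_mul, map_mul mat (s d * t d * s d) (t d), mat_t, mat_s_mul_t_mul_s,
      diagonal_mul_diagonal, diagonal_mul_diagonal]
    exact congrArg diagonal (funext fun _ => mul_comm _ _))

theorem mat_pow_mul_pow (i j : ℕ) :
    mat ((s d * t d * s d) ^ i * t d ^ j) = !![zeta d ^ i, 0; 0, zeta d ^ j] := by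
  rw [map_mul, map_pow, map_pow, mat_t, mat_s_mul_t_mul_s, diagonal_pow, diagonal_pow,
    diagonal_mul_diagonal, diagonal_fin_two]
  simp

theorem mat_pow_mul_pow_mul_s (i j : ℕ) :
    mat ((s d * t d * s d) ^ i * t d ^ j * s d) = !![0, zeta d ^ i; zeta d ^ j, 0] := by
  rw [map_mul, mat_pow_mul_pow, mat_s, Matrix.mul_fin_two]
  simp

theorem t_pow_eq_one [NeZero d] : t d ^ d = 1 := by
  have h := mat_pow_mul_pow (d := d) 0 d
  rw [pow_zero, one_mul, (Complex.isPrimitiveRoot_exp d (NeZero.ne d)).pow_eq_one] at h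
  exact mat_injective (by rw [h, map_one, Matrix.one_fin_two]; simp)

theorem closure_t_s : Subgroup.closure {t d, s d} = ⊤ := by
  have h : Subgroup.closure (((↑) : Gd12 d → GL (Fin 2) ℂ) ⁻¹' {genT d, genS}) = ⊤ :=
    Subgroup.closure_closure_coe_preimage
  convert h
  ext g
  simp [t, s, Subtype.ext_iff]

theorem exists_eq_pow_mul_pow [NeZero d] (g : Gd12 d) :
    ∃ i j : ℕ, g = (s d * t d * s d) ^ i * t d ^ j ∨ g = (s d * t d * s d) ^ i * t d ^ j * s d := by
  have hfin : ∀ x ∈ ({t d, s d} : Set (Gd12 d)), IsOfFinOrder x := by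
    rintro x (rfl | rfl)
    · exact isOfFinOrder_iff_pow_eq_one.mpr ⟨d, Nat.pos_of_neZero d, t_pow_eq_one⟩
    · exact isOfFinOrder_iff_pow_eq_one.mpr ⟨2, two_pos, by rw [sq, s_mul_s]⟩
  have hg : g ∈ Submonoid.closure {t d, s d} := by
    rw [← Subgroup.closure_toSubmonoid_of_isOfFinOrder hfin, closure_t_s]
    trivial
  exact exists_eq_pow_mul_pow_of_mem_closure_pair s_mul_s commute_t_s_mul_t_mul_s hg

theorem exists_mat_eq [NeZero d] (g : Gd12 d) :
    ∃ x y : ℂ, x ≠ 0 ∧ y ≠ 0 ∧ (mat g = !![x, 0; 0, y] ∨ mat g = !![0, x; y, 0]) := by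
  obtain ⟨i, j, rfl | rfl⟩ := exists_eq_pow_mul_pow g
  · exact ⟨_, _, pow_ne_zero i (Complex.exp_ne_zero _), pow_ne_zero j (Complex.exp_ne_zero _),
      Or.inl (mat_pow_mul_pow i j)⟩
  · exact ⟨_, _, pow_ne_zero i (Complex.exp_ne_zero _), pow_ne_zero j (Complex.exp_ne_zero _),
      Or.inr (mat_pow_mul_pow_mul_s i j)⟩

-- Elements of `W` are diagonal or antidiagonal; the diagonal ones are those with `mat g 0 1 = 0`.
def signChar [NeZero d] : Gd12 d →* ℂˣ where
  toFun g := if mat g 0 1 = 0 then 1 else -1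
  map_one' := by simp
  map_mul' g h := by
    obtain ⟨x, y, hx, hy, hg | hg⟩ := exists_mat_eq g <;>
    obtain ⟨x', y', hx', hy', hh | hh⟩ := exists_mat_eq h <;>
    simp [hg, hh, hx, hx', hy']

def detChar (d : ℕ) : Gd12 d →* ℂˣ := GeneralLinearGroup.det.comp (Gd12 d).subtype

theorem coe_detChar_apply (g : Gd12 d) : (detChar d g : ℂ) = (mat g).det := rfl

def symMonomial (d a b : ℕ) (g : Gd12 d) : ℂ :=
  if mat g 0 1 = 0 then mat g 0 0 ^ a * mat g 1 1 ^ b + mat g 0 0 ^ b * mat g 1 1 ^ a else 0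

theorem symMonomial_comm (a b : ℕ) : symMonomial d a b = symMonomial d b a := by
  funext g
  simp only [symMonomial, add_comm]

def charSubring (d : ℕ) : Subring (Gd12 d → ℂ) :=
  Subring.closure ({fun g => trace (mat g)} ∪ {f | ∃ χ : Gd12 d →* ℂˣ, f = fun g => (χ g : ℂ)})

theorem trace_mem_charSubring : (fun g => trace (mat g)) ∈ charSubring d :=
  Subring.subset_closure (Or.inl rfl)

theorem coe_mem_charSubring (χ : Gd12 d →* ℂˣ) : (fun g => (χ g : ℂ)) ∈ charSubring d :=
  Subring.subset_closure (Or.inr ⟨χ, rfl⟩)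

section NeZero

variable [NeZero d]

theorem symMonomial_zero_zero : symMonomial d 0 0 = 1 + fun g => (signChar g : ℂ) := by
  funext g
  obtain ⟨x, y, hx, hy, hg | hg⟩ := exists_mat_eq g <;> simp [symMonomial, signChar, hg, hx]

theorem symMonomial_one_zero : symMonomial d 1 0 = fun g => trace (mat g) := by
  funext g
  obtain ⟨x, y, hx, hy, hg | hg⟩ := exists_mat_eq g <;> simp [symMonomial, hg, hx, trace_fin_two]

theorem symMonomial_add_two_zero (m : ℕ) :
    symMonomial d (m + 2) 0 = (fun g => trace (mat g)) * symMonomial d (m + 1) 0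
      - (fun g => (detChar d g : ℂ)) * symMonomial d m 0 := by
  funext g
  obtain ⟨x, y, hx, hy, hg | hg⟩ := exists_mat_eq g <;>
    simp [symMonomial, coe_detChar_apply, hg, hx, trace_fin_two, det_fin_two]
  ring

theorem symMonomial_add_left (m b : ℕ) :
    symMonomial d (b + m) b = (fun g => (detChar d g : ℂ)) ^ b * symMonomial d m 0 := by
  funext g
  obtain ⟨x, y, hx, hy, hg | hg⟩ := exists_mat_eq g <;>
    simp [symMonomial, coe_detChar_apply, hg, hx, det_fin_two]
  ring

theorem symMonomial_zero_mem_charSubring (m : ℕ) : symMonomial d m 0 ∈ charSubring d := by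
  induction m using Nat.twoStepInduction with
  | zero =>
    rw [symMonomial_zero_zero]
    exact add_mem (one_mem _) (coe_mem_charSubring _)
  | one =>
    rw [symMonomial_one_zero]
    exact trace_mem_charSubring
  | more m hm hm' =>
    rw [symMonomial_add_two_zero]
    exact sub_mem (mul_mem trace_mem_charSubring hm') (mul_mem (coe_mem_charSubring _) hm)

theorem symMonomial_mem_charSubring (a b : ℕ) : symMonomial d a b ∈ charSubring d := by
  wlog hba : b ≤ a generalizing a b
  · rw [symMonomial_comm]
    exact this b a (le_of_not_ge hba)
  obtain ⟨m, rfl⟩ := Nat.exists_eq_add_of_le hba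
  rw [symMonomial_add_left]
  exact mul_mem (pow_mem (coe_mem_charSubring _) b) (symMonomial_zero_mem_charSubring m)

end NeZero

section Representation

variable (φ : FDRep ℂ (Gd12 d))

theorem rho_pow_mul_pow_apply {u : φ} {a b : ℂ} (ha : φ.ρ (t d) u = a • u)
    (hb : φ.ρ (s d * t d * s d) u = b • u) (i j : ℕ) :
    φ.ρ ((s d * t d * s d) ^ i * t d ^ j) u = (b ^ i * a ^ j) • u := by
  rw [map_mul, map_pow, map_pow, Module.End.mul_apply, Module.End.pow_apply_of_apply_eq_smul ha,
    map_smul, Module.End.pow_apply_of_apply_eq_smul hb, smul_smul, mul_comm]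

theorem rho_s_rho_s_apply (u : φ) : φ.ρ (s d) (φ.ρ (s d) u) = u := by
  rw [← Module.End.mul_apply, ← map_mul, s_mul_s, map_one, Module.End.one_apply]

theorem rho_t_rho_s_apply {u : φ} {b : ℂ} (hb : φ.ρ (s d * t d * s d) u = b • u) :
    φ.ρ (t d) (φ.ρ (s d) u) = b • φ.ρ (s d) u := by
  have hts : t d * s d = s d * (s d * t d * s d) := by
    rw [← mul_assoc, ← mul_assoc, s_mul_s, one_mul]
  rw [← Module.End.mul_apply, ← map_mul, hts, map_mul, Module.End.mul_apply, hb, map_smul]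

theorem rho_s_mul_t_mul_s_rho_s_apply {u : φ} {a : ℂ} (ha : φ.ρ (t d) u = a • u) :
    φ.ρ (s d * t d * s d) (φ.ρ (s d) u) = a • φ.ρ (s d) u := by
  rw [← Module.End.mul_apply, ← map_mul, mul_assoc, s_mul_s, mul_one, map_mul,
    Module.End.mul_apply, ha, map_smul]

variable [NeZero d]

theorem exists_eq_zeta_pow {u : φ} (hu : u ≠ 0) {a : ℂ} (ha : φ.ρ (t d) u = a • u) :
    ∃ p : ℕ, a = zeta d ^ p := by
  have h := Module.End.pow_apply_of_apply_eq_smul ha d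
  rw [← map_pow, t_pow_eq_one, map_one, Module.End.one_apply] at h
  have had : a ^ d = 1 := smul_left_injective ℂ hu (h.symm.trans (one_smul ℂ u).symm)
  obtain ⟨p, -, hp⟩ := (Complex.isPrimitiveRoot_exp d (NeZero.ne d)).eq_pow_of_pow_eq_one had
  exact ⟨p, hp.symm⟩

theorem span_pair_eq_top [Simple φ] {v : φ} (hv : v ≠ 0) {a b : ℂ} (ha : φ.ρ (t d) v = a • v)
    (hb : φ.ρ (s d * t d * s d) v = b • v) : Submodule.span ℂ {v, φ.ρ (s d) v} = ⊤ := by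
  refine FDRep.eq_top_of_invariant φ _ (by simp [hv]) fun g x hx => ?_
  obtain ⟨α, β, rfl⟩ := Submodule.mem_span_pair.mp hx
  have hv' := rho_pow_mul_pow_apply φ ha hb
  have hw' := rho_pow_mul_pow_apply φ (rho_t_rho_s_apply φ hb) (rho_s_mul_t_mul_s_rho_s_apply φ ha)
  rw [Submodule.mem_span_pair]
  obtain ⟨i, j, rfl | rfl⟩ := exists_eq_pow_mul_pow g
  · refine ⟨α * (b ^ i * a ^ j), β * (a ^ i * b ^ j), ?_⟩
    rw [map_add, map_smul, map_smul, hv', hw', smul_smul, smul_smul]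
  · refine ⟨β * (b ^ i * a ^ j), α * (a ^ i * b ^ j), ?_⟩
    rw [map_add, map_smul, map_smul, map_mul, Module.End.mul_apply, Module.End.mul_apply,
      rho_s_rho_s_apply, hv', hw', smul_smul, smul_smul, add_comm]

theorem character_eq_symMonomial {v : φ} (hli : LinearIndependent ℂ ![v, φ.ρ (s d) v])
    (hspan : Submodule.span ℂ {v, φ.ρ (s d) v} = ⊤) {p r : ℕ}
    (ha : φ.ρ (t d) v = zeta d ^ p • v) (hb : φ.ρ (s d * t d * s d) v = zeta d ^ r • v) :
    φ.character = symMonomial d r p := by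
  let B := Module.Basis.mk hli (by rw [Matrix.range_cons_cons_empty, hspan])
  have hB0 : B 0 = v := Module.Basis.mk_apply hli _ 0
  have hB1 : B 1 = φ.ρ (s d) v := Module.Basis.mk_apply hli _ 1
  have hv : B.repr v = Finsupp.single 0 1 := by rw [← hB0, B.repr_self]
  have hw : B.repr (φ.ρ (s d) v) = Finsupp.single 1 1 := by rw [← hB1, B.repr_self]
  have hv' := rho_pow_mul_pow_apply φ ha hb
  have hw' := rho_pow_mul_pow_apply φ (rho_t_rho_s_apply φ hb) (rho_s_mul_t_mul_s_rho_s_apply φ ha)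
  funext g
  rw [FDRep.character, LinearMap.trace_eq_repr_add_repr B, hB0, hB1]
  obtain ⟨i, j, rfl | rfl⟩ := exists_eq_pow_mul_pow g
  · rw [hv', hw']
    simp [hv, hw, symMonomial, mat_pow_mul_pow]
    ring
  · rw [map_mul, Module.End.mul_apply, Module.End.mul_apply, rho_s_rho_s_apply, hv', hw']
    simp [hv, hw, symMonomial, mat_pow_mul_pow_mul_s]

theorem character_mem_charSubring [Simple φ] : φ.character ∈ charSubring d := by
  have := FDRep.nontrivial_of_simple_s9 φ
  obtain ⟨v, hv, a, b, ha, hb⟩ :=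
    Module.End.exists_common_eigenvector ((commute_t_s_mul_t_mul_s (d := d)).map φ.ρ)
  have hspan := span_pair_eq_top φ hv ha hb
  by_cases hdep : ∃ μ : ℂ, μ • v = φ.ρ (s d) v
  · have hw : φ.ρ (s d) v ∈ Submodule.span ℂ {v} := Submodule.mem_span_singleton.mpr hdep
    rw [Set.pair_comm, Submodule.span_insert_eq_span hw,
      ← finrank_eq_one_iff_of_nonzero v hv] at hspan
    obtain ⟨χ, hχ⟩ := FDRep.exists_character_eq_of_finrank_eq_one φ hspan
    rw [hχ]
    exact coe_mem_charSubring χ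
  · have hw : φ.ρ (s d) v ≠ 0 := fun h => hv (by rw [← rho_s_rho_s_apply φ v, h, map_zero])
    obtain ⟨p, rfl⟩ := exists_eq_zeta_pow φ hv ha
    obtain ⟨r, rfl⟩ := exists_eq_zeta_pow φ hw (rho_t_rho_s_apply φ hb)
    rw [character_eq_symMonomial φ ((LinearIndependent.pair_iff' hv).mpr (not_exists.mp hdep))
      hspan ha hb]
    exact symMonomial_mem_charSubring r p

end Representation

end Gd12

end

/-- For the complex reflection group `W = G(d,1,2) ⊂ GL₂(ℂ)`, every
irreducible character of `W` lies in the subring of class functions generated by the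
character of the natural 2-dimensional representation (the trace of the inclusion) together
with the 1-dimensional representations `W → ℂˣ`. -/
theorem Gd12_repRing_generated (d : ℕ) (hd : 1 ≤ d)
    (φ : FDRep ℂ (Gd12 d)) (hφ : CategoryTheory.Simple φ) :
    φ.character ∈ Subring.closure
      ({fun g : Gd12 d => Matrix.trace ((g : GL (Fin 2) ℂ) : Matrix (Fin 2) (Fin 2) ℂ)} ∪
        {f : Gd12 d → ℂ | ∃ χ : Gd12 d →* ℂˣ, f = fun g => (χ g : ℂ)}) := by
  have : NeZero d := ⟨by omega⟩
  exact Gd12.character_mem_charSubring φ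
end

section
/- Let n ≥ 4 and let W ⊂ GL_n(ℂ) be the group of all signed permutation matrices (monomial matrices whose nonzero entries are ±1), i.e. the Coxeter group of type B_n acting by its natural n-dimensional reflection representation ℂ^n. Then the subring of the ring of class functions on W generated by the characters χ_{Λ^k ℂ^n}, 0 ≤ k ≤ n, is a proper subring of the representation ring R(W): there exists an irreducible character of W that does not belong to it. -/
open Matrix

/-- A signed permutation matrix: a monomial matrix whose nonzero entries are `±1`. -/
def IsSignedPerm {n : ℕ} (A : Matrix (Fin n) (Fin n) ℂ) : Prop :=
  ∃ (σ : Equiv.Perm (Fin n)) (ε : Fin n → ℂ), (∀ j, ε j = 1 ∨ ε j = -1) ∧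
    ∀ i j, A i j = if i = σ j then ε j else 0

lemma signedPerm_mul_entries {n : ℕ} {A B : Matrix (Fin n) (Fin n) ℂ}
    {σ τ : Equiv.Perm (Fin n)} {ε δ : Fin n → ℂ}
    (hA : ∀ i j, A i j = if i = σ j then ε j else 0)
    (hB : ∀ i j, B i j = if i = τ j then δ j else 0) :
    ∀ i j, (A * B) i j = if i = (σ * τ) j then ε (τ j) * δ j else 0 := by
  intro i j
  rw [Matrix.mul_apply, Finset.sum_eq_single (τ j)]
  · rw [hA, hB]
    simp [Equiv.Perm.mul_apply]
    exact if_congr Iff.rfl rfl rfl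
  · intro k _ hk
    rw [hB]
    simp [hk]
  · simp

lemma signedPerm_inv_entries {n : ℕ} {A : Matrix (Fin n) (Fin n) ℂ}
    {σ : Equiv.Perm (Fin n)} {ε : Fin n → ℂ} (hε : ∀ j, ε j = 1 ∨ ε j = -1)
    (hA : ∀ i j, A i j = if i = σ j then ε j else 0) :
    ∀ i j, A⁻¹ i j = if i = σ⁻¹ j then ε (σ⁻¹ j) else 0 := by
  have hsq : ∀ j, ε j * ε j = 1 := by
    intro j
    rcases hε j with h | h <;> rw [h] <;> norm_num
  have hmul : A * Matrix.of (fun i j => if i = σ⁻¹ j then ε (σ⁻¹ j) else 0) = 1 := by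
    ext i j
    rw [Matrix.mul_apply, Finset.sum_eq_single (σ⁻¹ j)]
    · rw [hA]
      by_cases h : i = j
      · subst h
        simp [hsq]
      · have h' : ¬ i = σ (σ⁻¹ j) := by simpa using fun hc => h (by simpa using hc)
        simp [h', Matrix.one_apply, h]
    · intro k _ hk
      simp [Matrix.of_apply]
      exact fun hc => absurd hc hk
    · simp
  rw [Matrix.inv_eq_right_inv hmul]
  intro i j
  rfl

/-- The group of all signed permutation matrices (monomial matrices with nonzero entries `±1`)
inside `GL_n(ℂ)`: the Coxeter group of type `B_n` in its natural reflection representation. -/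
def signedPermGroup (n : ℕ) : Subgroup (GL (Fin n) ℂ) where
  carrier := {g | IsSignedPerm (g : Matrix (Fin n) (Fin n) ℂ)}
  one_mem' := ⟨1, fun _ => 1, fun _ => Or.inl rfl, by intro i j; simp [Matrix.one_apply]; exact if_congr Iff.rfl rfl rfl⟩
  mul_mem' := by
    rintro a b ⟨σ, ε, hε, hA⟩ ⟨τ, δ, hδ, hB⟩
    refine ⟨σ * τ, fun j => ε (τ j) * δ j, fun j => ?_, ?_⟩
    · rcases hε (τ j) with h1 | h1 <;> rcases hδ j with h2 | h2 <;> simp [h1, h2]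
    · have : ((a * b : GL (Fin n) ℂ) : Matrix (Fin n) (Fin n) ℂ) =
        (a : Matrix (Fin n) (Fin n) ℂ) * (b : Matrix (Fin n) (Fin n) ℂ) := Units.val_mul a b
      rw [this]
      exact signedPerm_mul_entries hA hB
  inv_mem' := by
    rintro a ⟨σ, ε, hε, hA⟩
    refine ⟨σ⁻¹, fun j => ε (σ⁻¹ j), fun j => hε _, ?_⟩
    rw [Matrix.coe_units_inv]
    exact signedPerm_inv_entries hε hA

/-- The number of entries of a matrix equal to `-1`. -/
noncomputable def negEntriesCard {n : ℕ} (A : Matrix (Fin n) (Fin n) ℂ) : ℕ :=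
  (Finset.univ.filter fun p : Fin n × Fin n => A p.1 p.2 = -1).card

lemma negEntriesCard_eq {n : ℕ} {A : Matrix (Fin n) (Fin n) ℂ} {σ : Equiv.Perm (Fin n)}
    {ε : Fin n → ℂ} (hA : ∀ i j, A i j = if i = σ j then ε j else 0) :
    negEntriesCard A = (Finset.univ.filter fun j => ε j = -1).card := by
  classical
  apply Finset.card_nbij' (i := fun p => p.2) (j := fun j => (σ j, j))
  · intro p hp
    simp only [Finset.mem_coe, Finset.mem_filter, Finset.mem_univ, true_and] at hp ⊢
    rw [hA] at hp
    by_cases h : p.1 = σ p.2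
    · rwa [if_pos h] at hp
    · rw [if_neg h] at hp
      norm_num at hp
  · intro j hj
    simp only [Finset.mem_coe, Finset.mem_filter, Finset.mem_univ, true_and] at hj ⊢
    rw [hA]
    simp [hj]
  · intro p hp
    simp only [Finset.mem_coe, Finset.mem_filter, Finset.mem_univ, true_and] at hp
    rw [hA] at hp
    by_cases h : p.1 = σ p.2
    · simp [← h]
    · rw [if_neg h] at hp
      norm_num at hp
  · intro j _
    rfl

lemma prod_eq_one_iff_even {n : ℕ} {ε : Fin n → ℂ} (hε : ∀ j, ε j = 1 ∨ ε j = -1) :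
    (∏ j, ε j) = 1 ↔ Even (Finset.univ.filter fun j => ε j = -1).card := by
  classical
  have h1 : (∏ j, ε j) = (-1 : ℂ) ^ (Finset.univ.filter fun j => ε j = -1).card := by
    rw [← Finset.prod_filter_mul_prod_filter_not Finset.univ (fun j => ε j = -1) ε]
    rw [Finset.prod_congr rfl (fun j hj => (Finset.mem_filter.mp hj).2),
      Finset.prod_const]
    have : ∀ j ∈ Finset.univ.filter fun j => ¬ ε j = -1, ε j = 1 := by
      intro j hj
      rcases hε j with h | h
      · exact h
      · exact absurd h (Finset.mem_filter.mp hj).2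
    rw [Finset.prod_congr rfl this, Finset.prod_const, one_pow, mul_one]
  rw [h1]
  exact neg_one_pow_eq_one_iff_even (by norm_num)

/-- The Coxeter group of type `D_n`: signed permutation matrices with an even number of
entries equal to `-1`, inside `GL_n(ℂ)`. -/
def evenSignedPermGroup (n : ℕ) : Subgroup (GL (Fin n) ℂ) where
  carrier := {g | IsSignedPerm (g : Matrix (Fin n) (Fin n) ℂ) ∧
    Even (negEntriesCard (g : Matrix (Fin n) (Fin n) ℂ))}
  one_mem' := by
    have hA : ∀ i j, (1 : Matrix (Fin n) (Fin n) ℂ) i j =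
        if i = (1 : Equiv.Perm (Fin n)) j then (fun _ => (1 : ℂ)) j else 0 := by
      intro i j; simp [Matrix.one_apply]; exact if_congr Iff.rfl rfl rfl
    refine ⟨⟨1, fun _ => 1, fun _ => Or.inl rfl, hA⟩, ?_⟩
    rw [show ((1 : GL (Fin n) ℂ) : Matrix (Fin n) (Fin n) ℂ) = 1 from rfl,
      negEntriesCard_eq hA]
    rw [Finset.filter_congr (fun j _ => by norm_num : ∀ j ∈ Finset.univ,
      ((fun _ => (1:ℂ)) j = -1 ↔ False))]
    simp
  mul_mem' := by
    rintro a b ⟨⟨σ, ε, hε, hA⟩, hae⟩ ⟨⟨τ, δ, hδ, hB⟩, hbe⟩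
    have hvals : ∀ j, ε (τ j) * δ j = 1 ∨ ε (τ j) * δ j = -1 := by
      intro j
      rcases hε (τ j) with h1 | h1 <;> rcases hδ j with h2 | h2 <;> simp [h1, h2]
    have hab : ((a * b : GL (Fin n) ℂ) : Matrix (Fin n) (Fin n) ℂ) =
        (a : Matrix (Fin n) (Fin n) ℂ) * (b : Matrix (Fin n) (Fin n) ℂ) := Units.val_mul a b
    have hABent := signedPerm_mul_entries hA hB
    refine ⟨⟨σ * τ, fun j => ε (τ j) * δ j, hvals, by rw [hab]; exact hABent⟩, ?_⟩
    rw [hab, negEntriesCard_eq hABent, ← prod_eq_one_iff_even hvals]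
    rw [Finset.prod_mul_distrib, Equiv.prod_comp τ ε]
    rw [(prod_eq_one_iff_even hε).mpr (by rwa [negEntriesCard_eq hA] at hae),
      (prod_eq_one_iff_even hδ).mpr (by rwa [negEntriesCard_eq hB] at hbe), one_mul]
  inv_mem' := by
    rintro a ⟨⟨σ, ε, hε, hA⟩, hae⟩
    have hent : ∀ i j, ((a⁻¹ : GL (Fin n) ℂ) : Matrix (Fin n) (Fin n) ℂ) i j =
        if i = σ⁻¹ j then ε (σ⁻¹ j) else 0 := by
      rw [Matrix.coe_units_inv]
      exact signedPerm_inv_entries hε hA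
    refine ⟨⟨σ⁻¹, fun j => ε (σ⁻¹ j), fun j => hε _, hent⟩, ?_⟩
    rw [negEntriesCard_eq hent, ← prod_eq_one_iff_even (fun j => hε (σ⁻¹ j))]
    rw [Equiv.prod_comp σ⁻¹ ε]
    rw [(prod_eq_one_iff_even hε).mpr (by rwa [negEntriesCard_eq hA] at hae)]

lemma extAlgMap_mapsTo {M N : Type*} [AddCommGroup M] [Module ℂ M] [AddCommGroup N]
    [Module ℂ N] (k : ℕ) (f : M →ₗ[ℂ] N) :
    ∀ x ∈ ⋀[ℂ]^k M, ExteriorAlgebra.map f x ∈ ⋀[ℂ]^k N := by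
  intro x hx
  have hle : Submodule.map (ExteriorAlgebra.map f).toLinearMap
      (LinearMap.range (ExteriorAlgebra.ι ℂ (M := M)) ^ k) ≤
      LinearMap.range (ExteriorAlgebra.ι ℂ (M := N)) ^ k := by
    rw [Submodule.map_pow, ExteriorAlgebra.ι_range_map_map]
    exact pow_le_pow_left' LinearMap.map_le_range k
  exact hle ⟨x, hx, rfl⟩

/-- The linear map induced on `k`-th exterior powers by a linear map. -/
noncomputable def extPowMap {M N : Type*} [AddCommGroup M] [Module ℂ M] [AddCommGroup N]
    [Module ℂ N] (k : ℕ) (f : M →ₗ[ℂ] N) : ⋀[ℂ]^k M →ₗ[ℂ] ⋀[ℂ]^k N :=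
  (ExteriorAlgebra.map f).toLinearMap.restrict (extAlgMap_mapsTo k f)

/-- The character of the `k`-th exterior power of a representation. -/
noncomputable def extPowChar {G M : Type*} [Group G] [AddCommGroup M] [Module ℂ M]
    (ρ : Representation ℂ G M) (k : ℕ) : G → ℂ :=
  fun g => LinearMap.trace ℂ (⋀[ℂ]^k M) (extPowMap k (ρ g))

/-- The tautological representation of `GL_n(ℂ)` on `ℂ^n`. -/
noncomputable def glRep (n : ℕ) : Representation ℂ (GL (Fin n) ℂ) (Fin n → ℂ) where
  toFun g := Matrix.mulVecLin (g : Matrix (Fin n) (Fin n) ℂ)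
  map_one' := by
    simp only [Units.val_one, Matrix.mulVecLin_one]
    rfl
  map_mul' g h := by
    simp only [Units.val_mul, Matrix.mulVecLin_mul]
    rfl

/-- The restriction of the tautological representation of `GL_n(ℂ)` to a subgroup. -/
noncomputable def subGLRep {n : ℕ} (W : Subgroup (GL (Fin n) ℂ)) :
    Representation ℂ W (Fin n → ℂ) :=
  (glRep n).comp W.subtype

/-!
The character `g ↦ ∏ j, ε j` of `W`, the product of the signs of a signed permutation matrix, is
one-dimensional, hence irreducible. It takes the value `1` on the transposition of two coordinates
and `-1` on the sign change of one coordinate. These two reflections are conjugate in `GL_n(ℂ)`, so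
every exterior power character, and with it every element of the subring they generate, takes the
same value on both.
-/

open CategoryTheory

universe u

theorem FDRep.simple_of_isSimpleModule {k G V : Type u} [Field k] [Monoid G] [AddCommGroup V]
    [Module k V] [FiniteDimensional k V] [IsSimpleModule k V] (ρ : Representation k G V) :
    Simple (FDRep.of ρ) :=
  have : Simple ((Action.forget (FGModuleCat k) G ⋙ forget₂ (FGModuleCat k) (ModuleCat k)).obj
      (FDRep.of ρ)) := _root_.simple_of_isSimpleModule (R := k) (M := V)
  (Action.forget (FGModuleCat k) G ⋙ forget₂ (FGModuleCat k) (ModuleCat k)).simple_of_simple_obj _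

noncomputable def Representation.ofCharacter {k G : Type*} [Field k] [Monoid G] (χ : G →* k) :
    Representation k G k :=
  (Algebra.lmul k k).toMonoidHom.comp χ

theorem FDRep.character_of_ofCharacter {k G : Type u} [Field k] [Monoid G] (χ : G →* k) :
    (FDRep.of (Representation.ofCharacter χ)).character = χ :=
  funext fun g => Algebra.trace_self_apply (χ g)

theorem apply_eq_of_mem_subringClosure {ι R : Type*} [Ring R] {S : Set (ι → R)} {i j : ι}
    (hS : ∀ f ∈ S, f i = f j) {f : ι → R} (hf : f ∈ Subring.closure S) : f i = f j :=
  (Subring.closure_le (t := RingHom.eqLocus (Pi.evalRingHom (fun _ => R) i)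
    (Pi.evalRingHom (fun _ => R) j))).mpr hS hf

theorem extPowMap_eq_exteriorPowerMap {M N : Type*} [AddCommGroup M] [Module ℂ M]
    [AddCommGroup N] [Module ℂ N] (k : ℕ) (f : M →ₗ[ℂ] N) :
    extPowMap k f = exteriorPower.map k f :=
  exteriorPower.linearMap_ext <| AlternatingMap.ext fun m => Subtype.ext <|
    (ExteriorAlgebra.map_apply_ιMulti f m).trans
      (congrArg Subtype.val (exteriorPower.map_apply_ιMulti f m)).symm

namespace exteriorPower

variable {R M N : Type*} [CommRing R] [AddCommGroup M] [Module R M] [AddCommGroup N] [Module R N]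

noncomputable def mapEquiv (k : ℕ) (e : M ≃ₗ[R] N) : ⋀[R]^k M ≃ₗ[R] ⋀[R]^k N :=
  LinearEquiv.ofLinearMap (f := map k e) (g := map k e.symm)
    (by rw [← map_comp, e.comp_symm, map_id]) (by rw [← map_comp, e.symm_comp, map_id])

theorem map_conj (k : ℕ) (e : M ≃ₗ[R] N) (f : Module.End R M) :
    map k (e.conj f) = (mapEquiv k e).conj (map k f) := by
  simp only [LinearEquiv.conj_apply, map_comp]
  rfl

end exteriorPower

theorem extPowChar_eq_of_conj {G M : Type*} [Group G] [AddCommGroup M] [Module ℂ M]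
    (ρ : Representation ℂ G M) (k : ℕ) {g h : G} (e : M ≃ₗ[ℂ] M) (hgh : ρ g = e.conj (ρ h)) :
    extPowChar ρ k g = extPowChar ρ k h := by
  simp only [extPowChar, extPowMap_eq_exteriorPowerMap, hgh, exteriorPower.map_conj,
    LinearMap.trace_conj']

section SignedPerm

variable {n : ℕ}

def signedPermMatrix (σ : Equiv.Perm (Fin n)) (ε : Fin n → ℂ) : Matrix (Fin n) (Fin n) ℂ :=
  Matrix.of fun i j => if i = σ j then ε j else 0

theorem signedPermMatrix_mulVec (σ : Equiv.Perm (Fin n)) (ε x : Fin n → ℂ) (i : Fin n) :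
    (signedPermMatrix σ ε *ᵥ x) i = ε (σ⁻¹ i) * x (σ⁻¹ i) := by
  simp [signedPermMatrix, Matrix.mulVec, dotProduct, ← Equiv.symm_apply_eq]

theorem signedPermMatrix_mul (σ τ : Equiv.Perm (Fin n)) (ε δ : Fin n → ℂ) :
    signedPermMatrix σ ε * signedPermMatrix τ δ =
      signedPermMatrix (σ * τ) (fun j => ε (τ j) * δ j) :=
  Matrix.ext (signedPerm_mul_entries (fun _ _ => rfl) (fun _ _ => rfl))

theorem signedPermMatrix_mul_inv {σ : Equiv.Perm (Fin n)} {ε : Fin n → ℂ}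
    (hε : ∀ j, ε j = 1 ∨ ε j = -1) :
    signedPermMatrix σ ε * signedPermMatrix σ⁻¹ (fun j => ε (σ⁻¹ j)) = 1 := by
  ext i j
  rw [signedPermMatrix_mul]
  rcases hε (σ.symm j) with h | h <;> simp [signedPermMatrix, h, Matrix.one_apply]

noncomputable def signedPermElem (σ : Equiv.Perm (Fin n)) (ε : Fin n → ℂ)
    (hε : ∀ j, ε j = 1 ∨ ε j = -1) : signedPermGroup n :=
  ⟨Units.mkOfMulEqOne _ _ (signedPermMatrix_mul_inv hε), σ, ε, hε, fun _ _ => rfl⟩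

theorem sum_apply_eq_of_signedPerm {A : Matrix (Fin n) (Fin n) ℂ} {σ : Equiv.Perm (Fin n)}
    {ε : Fin n → ℂ} (hA : ∀ i j, A i j = if i = σ j then ε j else 0) (j : Fin n) :
    ∑ i, A i j = ε j := by
  simp [hA]

/-- The column sums of a signed permutation matrix are its signs `ε j`, so this is the character
`g ↦ ∏ j, ε j`. -/
noncomputable def signProd (n : ℕ) : signedPermGroup n →* ℂ where
  toFun g := ∏ j, ∑ i, ((g : GL (Fin n) ℂ) : Matrix (Fin n) (Fin n) ℂ) i j
  map_one' := by simp [Matrix.one_apply]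
  map_mul' a b := by
    obtain ⟨σ, ε, -, hA⟩ := a.2
    obtain ⟨τ, δ, -, hB⟩ := b.2
    simp only [Subgroup.coe_mul, Units.val_mul,
      sum_apply_eq_of_signedPerm (signedPerm_mul_entries hA hB), sum_apply_eq_of_signedPerm hA,
      sum_apply_eq_of_signedPerm hB, Finset.prod_mul_distrib, Equiv.prod_comp τ ε]

theorem signProd_signedPermElem (σ : Equiv.Perm (Fin n)) (ε : Fin n → ℂ)
    (hε : ∀ j, ε j = 1 ∨ ε j = -1) : signProd n (signedPermElem σ ε hε) = ∏ j, ε j :=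
  show ∏ j, ∑ i, signedPermMatrix σ ε i j = _ from
    Finset.prod_congr rfl fun j _ => sum_apply_eq_of_signedPerm (fun _ _ => rfl) j

end SignedPerm

section PlaneRotation

variable {n : ℕ} {a b : Fin n}

/-- Carries the `(-1)`-eigenvector `e_a` of the sign change at `a` to the `(-1)`-eigenvector
`e_a - e_b` of the transposition `(a b)`, and `e_b` to its fixed vector `e_a + e_b`. -/
noncomputable def planeRotation (hab : a ≠ b) : (Fin n → ℂ) ≃ₗ[ℂ] (Fin n → ℂ) where
  toFun x i := if i = a then x a + x b else if i = b then x b - x a else x i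
  invFun y i := if i = a then (y a - y b) / 2 else if i = b then (y a + y b) / 2 else y i
  map_add' x y := by ext i; simp only [Pi.add_apply]; split_ifs <;> ring
  map_smul' c x := by
    ext i; simp only [Pi.smul_apply, smul_eq_mul, RingHom.id_apply]; split_ifs <;> ring
  left_inv x := by
    ext i; by_cases hia : i = a <;> by_cases hib : i = b <;> simp [hia, hib, hab.symm] <;> ring
  right_inv y := by
    ext i; by_cases hia : i = a <;> by_cases hib : i = b <;> simp [hia, hib, hab.symm] <;> ring

theorem mulVecLin_swap_eq_conj (hab : a ≠ b) :
    (signedPermMatrix (Equiv.swap a b) 1).mulVecLin =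
      (planeRotation hab).conj (signedPermMatrix 1 fun j => if j = a then -1 else 1).mulVecLin := by
  rw [LinearEquiv.conj_apply, LinearEquiv.eq_comp_toLinearMap_symm]
  refine LinearMap.ext fun x => funext fun i => ?_
  by_cases hia : i = a <;> by_cases hib : i = b <;>
    simp [planeRotation, signedPermMatrix_mulVec, Equiv.swap_apply_of_ne_of_ne, hia, hib,
      hab.symm] <;> ring

end PlaneRotation

/-- For `n ≥ 4` and `W ⊂ GL_n(ℂ)` the Coxeter group of type `B_n` of all
signed permutation matrices, the subring of class functions generated by the characters of
the exterior powers `Λ^k ℂ^n`, `0 ≤ k ≤ n`, of the natural reflection representation is a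
proper subring of `R(W)`: some irreducible character of `W` does not belong to it. -/
theorem typeB_extPowers_do_not_generate (n : ℕ) (hn : 4 ≤ n) :
    ∃ φ : FDRep ℂ (signedPermGroup n), CategoryTheory.Simple φ ∧
      φ.character ∉ Subring.closure
        {f : signedPermGroup n → ℂ | ∃ k ≤ n, f = extPowChar (subGLRep (signedPermGroup n)) k} := by
  let a : Fin n := ⟨0, by omega⟩
  let b : Fin n := ⟨1, by omega⟩
  have hab : a ≠ b := by simp [a, b, Fin.ext_iff]
  let swap := signedPermElem (Equiv.swap a b) 1 fun _ => .inl rfl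
  let negA := signedPermElem 1 (fun j => if j = a then -1 else 1) fun j => by split_ifs <;> simp
  refine ⟨FDRep.of (Representation.ofCharacter (signProd n)),
    FDRep.simple_of_isSimpleModule _, fun hmem => ?_⟩
  have hconj : ∀ f ∈ {f : signedPermGroup n → ℂ | ∃ k ≤ n,
      f = extPowChar (subGLRep (signedPermGroup n)) k}, f swap = f negA := by
    rintro f ⟨k, -, rfl⟩
    exact extPowChar_eq_of_conj _ k (planeRotation hab) (mulVecLin_swap_eq_conj hab)
  have h := apply_eq_of_mem_subringClosure hconj hmem
  rw [FDRep.character_of_ofCharacter, signProd_signedPermElem, signProd_signedPermElem] at h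
  norm_num at h
end
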